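/- Let n ≥ 1 and q ≥ 4, and assume (n,q) ∉ {(1,5), (2,5), (1,6), (2,7), (1,9)}. Then the Lee graph G(n,q) has adjacency eigenvalues θ_1* and θ_2* satisfying 0 ≥ θ_1* > −1 and −1 ≥ θ_2* ≥ −2. -/

import Mathlib

open Finset Polynomial

/-- The `t`-th power graph: vertices are adjacent when they are distinct and at
graph (geodesic) distance at most `t` in `G`. -/
def powerGraph {V : Type*} (G : SimpleGraph V) (t : ℕ) : SimpleGraph V where
  Adj u v := u ≠ v ∧ G.Reachable u v ∧ G.dist u v ≤ t
  symm := ⟨by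
    rintro u v ⟨h1, h2, h3⟩
    exact ⟨h1.symm, h2.symm, by rwa [SimpleGraph.dist_comm]⟩⟩
  loopless := ⟨fun v h => h.1 rfl⟩

/-- The distance-`t` chromatic number of a graph. -/
noncomputable def distChromaticNumber {V : Type*} (G : SimpleGraph V) (t : ℕ) : ℕ∞ :=
  (powerGraph G t).chromaticNumber

/-- `x` is an eigenvalue of the (real) adjacency matrix of `G`. -/
def IsAdjEigenvalue {V : Type*} [Fintype V] [DecidableEq V] (G : SimpleGraph V)
    [DecidableRel G.Adj] (x : ℝ) : Prop :=
  ∃ v : V → ℝ, v ≠ 0 ∧ (SimpleGraph.adjMatrix ℝ G).mulVec v = x • v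

/-- The hypercube graph `Q_n`. -/
def hypercube (n : ℕ) : SimpleGraph (Fin n → Fin 2) where
  Adj u v := hammingDist u v = 1
  symm := ⟨fun u v h => by show hammingDist v u = 1; rw [hammingDist_comm]; exact h⟩
  loopless := ⟨fun u h => by
    have h' : hammingDist u u = 1 := h
    simp only [hammingDist_self] at h'; exact absurd h' (by norm_num)⟩

noncomputable instance (n : ℕ) : DecidableRel (hypercube n).Adj :=
  fun _ _ => Classical.dec _

/-- The Lee graph `G(n,q)`: the `n`-fold Cartesian product of the `q`-cycle. -/
def leeGraph (n q : ℕ) : SimpleGraph (Fin n → ZMod q) where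
  Adj u v := u ≠ v ∧ ∃ i, (u i = v i + 1 ∨ v i = u i + 1) ∧ ∀ j, j ≠ i → u j = v j
  symm := ⟨by
    rintro u v ⟨hne, i, h, hj⟩
    exact ⟨hne.symm, i, h.symm, fun j hji => (hj j hji).symm⟩⟩
  loopless := ⟨fun u h => h.1 rfl⟩

noncomputable instance (n q : ℕ) : DecidableRel (leeGraph n q).Adj :=
  fun _ _ => Classical.dec _

/-- The Lee distance on `(ℤ/qℤ)^n`. -/
def leeDist {n q : ℕ} (b c : Fin n → ZMod q) : ℕ :=
  ∑ i, min ((b i - c i).val) (q - (b i - c i).val)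

set_option maxHeartbeats 1000000

noncomputable def cv (q j : ℕ) : ℝ := 2 * Real.cos (2 * Real.pi * j / q)

lemma val_add_one_real (q : ℕ) [NeZero q] (hq : 3 ≤ q) (a : ZMod q) :
    ∃ d : ℤ, ((a + 1).val : ℝ) = (a.val : ℝ) + 1 - q * d := by
  haveI : Fact (1 < q) := ⟨by omega⟩
  refine ⟨((a.val + 1) / q : ℕ), ?_⟩
  have h1 : (a + 1).val = (a.val + 1) % q := by
    rw [ZMod.val_add, ZMod.val_one]
  have h2 : (a.val + 1) % q + q * ((a.val + 1) / q) = a.val + 1 := Nat.mod_add_div _ _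
  have h2R : (((a.val + 1) % q : ℕ) : ℝ) + (q : ℝ) * (((a.val + 1) / q : ℕ) : ℝ)
      = (a.val : ℝ) + 1 := by exact_mod_cast congrArg (Nat.cast : ℕ → ℝ) h2
  have h1R : ((a + 1).val : ℝ) = (((a.val + 1) % q : ℕ) : ℝ) := by exact_mod_cast congrArg (Nat.cast : ℕ → ℝ) h1
  rw [h1R]
  have hd : ((((a.val + 1) / q : ℕ) : ℤ) : ℝ) = (((a.val + 1) / q : ℕ) : ℝ) := by norm_cast
  rw [hd]
  linarith

theorem lee_eigen (n q : ℕ) [NeZero q] (hq : 3 ≤ q) (k : Fin n → ℕ) :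
    IsAdjEigenvalue (leeGraph n q) (∑ i, cv q (k i)) := by
  have hq0 : (q : ℝ) ≠ 0 := by positivity
  have h1ne : (1 : ZMod q) ≠ 0 := by
    intro h
    have h' : ((1 : ℕ) : ZMod q) = 0 := by push_cast; exact h
    rw [ZMod.natCast_eq_zero_iff] at h'
    have := Nat.le_of_dvd one_pos h'
    omega
  have h2ne : (1 : ZMod q) ≠ -1 := by
    intro h
    have h' : ((2 : ℕ) : ZMod q) = 0 := by push_cast; linear_combination h
    rw [ZMod.natCast_eq_zero_iff] at h'
    have := Nat.le_of_dvd two_pos h'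
    omega
  have hm1ne : (-1 : ZMod q) ≠ 0 := by
    intro h
    exact h1ne (neg_eq_zero.mp h)
  set α : ℝ := 2 * Real.pi / q with hα
  set θ : (Fin n → ZMod q) → ℝ := fun u => ∑ i, (k i : ℝ) * (α * ((u i).val : ℝ)) with hθ
  refine ⟨fun u => Real.cos (θ u), ?_, ?_⟩
  · intro h
    have h0 := congrFun h 0
    have hz : θ 0 = 0 := by
      rw [hθ]
      simp
    rw [hz] at h0
    simp at h0
  · funext u
    rw [SimpleGraph.adjMatrix_mulVec_apply]
    set g : Fin n × Bool → (Fin n → ZMod q) :=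
      fun p => Function.update u p.1 (u p.1 + (cond p.2 1 (-1))) with hg
    have hgtrue : ∀ i, g (i, true) = Function.update u i (u i + 1) := fun i => rfl
    have hgfalse : ∀ i, g (i, false) = Function.update u i (u i - 1) := by
      intro i
      simp only [hg, cond_false, sub_eq_add_neg]
    have hginj : Function.Injective g := by
      rintro ⟨i, b⟩ ⟨j, b'⟩ h
      by_cases hij : i = j
      · subst hij
        have hii := congrFun h i
        simp only [hg, Function.update_self] at hii
        have hbb : (cond b (1 : ZMod q) (-1)) = cond b' 1 (-1) := add_left_cancel hii
        have : b = b' := by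
          cases b <;> cases b' <;> simp only [cond_true, cond_false] at hbb
          · rfl
          · exact absurd hbb.symm h2ne
          · exact absurd hbb h2ne
          · rfl
        rw [this]
      · exfalso
        have hjj := congrFun h j
        simp only [hg] at hjj
        rw [Function.update_of_ne (Ne.symm hij), Function.update_self] at hjj
        have : (cond b' (1 : ZMod q) (-1)) = 0 := by linear_combination -hjj
        cases b' <;> simp only [cond_true, cond_false] at this
        · exact hm1ne this
        · exact h1ne this
    have himg : (leeGraph n q).neighborFinset u = Finset.image g Finset.univ := by
      ext w
      rw [SimpleGraph.mem_neighborFinset, Finset.mem_image]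
      change (u ≠ w ∧ ∃ i, (u i = w i + 1 ∨ w i = u i + 1) ∧ ∀ j, j ≠ i → u j = w j) ↔ _
      constructor
      · rintro ⟨hne, i, hcase, hall⟩
        rcases hcase with h | h
        · refine ⟨(i, false), Finset.mem_univ _, ?_⟩
          rw [hgfalse]
          funext j
          by_cases hj : j = i
          · subst hj
            rw [Function.update_self]
            linear_combination h
          · rw [Function.update_of_ne hj]
            exact (hall j hj)
        · refine ⟨(i, true), Finset.mem_univ _, ?_⟩
          rw [hgtrue]
          funext j
          by_cases hj : j = i
          · subst hj
            rw [Function.update_self]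
            linear_combination -h
          · rw [Function.update_of_ne hj]
            exact (hall j hj)
      · rintro ⟨⟨i, b⟩, -, rfl⟩
        constructor
        · intro hbad
          have hii := congrFun hbad i
          simp only [hg, Function.update_self] at hii
          have : (cond b (1 : ZMod q) (-1)) = 0 := by linear_combination -hii
          cases b <;> simp only [cond_true, cond_false] at this
          · exact hm1ne this
          · exact h1ne this
        · refine ⟨i, ?_, fun j hj => ?_⟩
          · cases b
            · left
              rw [hgfalse, Function.update_self]
              ring
            · right
              rw [hgtrue, Function.update_self]
          · cases b
            · rw [hgfalse, Function.update_of_ne hj]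
            · rw [hgtrue, Function.update_of_ne hj]
    rw [himg, Finset.sum_image (fun x _ y _ h => hginj h)]
    have hsplit : ∀ (i : Fin n) (x : ZMod q),
        θ (Function.update u i x) = θ u + (k i : ℝ) * α * ((x.val : ℝ) - ((u i).val : ℝ)) := by
      intro i x
      have key : ∀ j : Fin n, (k j : ℝ) * (α * (((Function.update u i x j).val : ℝ)))
          = (k j : ℝ) * (α * ((u j).val : ℝ))
            + (if j = i then (k i : ℝ) * α * ((x.val : ℝ) - ((u i).val : ℝ)) else 0) := by
        intro j
        by_cases hj : j = i
        · subst hj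
          rw [Function.update_self, if_pos rfl]
          ring
        · rw [Function.update_of_ne hj, if_neg hj, add_zero]
      rw [hθ]
      simp only []
      rw [Finset.sum_congr rfl (fun j _ => key j), Finset.sum_add_distrib,
        Finset.sum_ite_eq' Finset.univ i]
      simp
    have hterm : ∀ i : Fin n,
        Real.cos (θ (g (i, true))) + Real.cos (θ (g (i, false)))
          = cv q (k i) * Real.cos (θ u) := by
      intro i
      obtain ⟨d, hd⟩ := val_add_one_real q hq (u i)
      obtain ⟨e, he⟩ := val_add_one_real q hq (u i - 1)
      have he' : (((u i - 1).val : ℝ)) = ((u i).val : ℝ) - 1 + q * e := by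
        have hsub : (u i - 1) + 1 = u i := by ring
        rw [hsub] at he
        linarith
      have hcos1 : Real.cos (θ (g (i, true))) = Real.cos (θ u + α * (k i : ℝ)) := by
        rw [hgtrue, hsplit, hd]
        have harg : θ u + (k i : ℝ) * α * (((u i).val : ℝ) + 1 - q * d - ((u i).val : ℝ))
            = θ u + α * (k i : ℝ) + (-(k i * d) : ℤ) * (2 * Real.pi) := by
          push_cast
          rw [hα]
          field_simp
          ring
        rw [harg, Real.cos_add_int_mul_two_pi]
      have hcos2 : Real.cos (θ (g (i, false))) = Real.cos (θ u - α * (k i : ℝ)) := by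
        rw [hgfalse, hsplit, he']
        have harg : θ u + (k i : ℝ) * α * (((u i).val : ℝ) - 1 + q * e - ((u i).val : ℝ))
            = θ u - α * (k i : ℝ) + ((k i * e) : ℤ) * (2 * Real.pi) := by
          push_cast
          rw [hα]
          field_simp
          ring
        rw [harg, Real.cos_add_int_mul_two_pi]
      rw [hcos1, hcos2, Real.cos_add, Real.cos_sub, cv]
      have hβ : α * (k i : ℝ) = 2 * Real.pi * (k i : ℝ) / q := by
        rw [hα]; ring
      rw [hβ]
      ring
    rw [Fintype.sum_prod_type]
    simp only [Fintype.sum_bool]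
    rw [Finset.sum_congr rfl (fun i _ => hterm i)]
    rw [← Finset.sum_mul]
    simp [mul_comm]

def achQ (q n : ℕ) (s : ℝ) : Prop := ∃ k : Fin n → ℕ, (∑ i, cv q (k i)) = s

lemma achQ_zero (q : ℕ) : achQ q 0 0 := ⟨fun i => 0, by simp⟩

lemma achQ_single (q j : ℕ) : achQ q 1 (cv q j) := ⟨fun _ => j, by simp⟩

lemma achQ_add {q n₁ n₂ : ℕ} {s₁ s₂ : ℝ} (h₁ : achQ q n₁ s₁) (h₂ : achQ q n₂ s₂) :
    achQ q (n₁ + n₂) (s₁ + s₂) := by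
  obtain ⟨k₁, hk₁⟩ := h₁
  obtain ⟨k₂, hk₂⟩ := h₂
  refine ⟨Fin.append k₁ k₂, ?_⟩
  rw [Fin.sum_univ_add]
  simp only [Fin.append_left, Fin.append_right, hk₁, hk₂]

lemma achQ_nsmul {q z : ℕ} {s : ℝ} (h : achQ q z s) (t : ℕ) :
    achQ q (t * z) ((t : ℝ) * s) := by
  induction t with
  | zero => simpa using achQ_zero q
  | succ t ih =>
      have := achQ_add ih h
      have hn : (t + 1) * z = t * z + z := by ring
      have hs : ((t : ℝ) + 1) * s = (t : ℝ) * s + s := by ring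
      rw [hn]
      push_cast
      rw [hs]
      exact this

lemma sum_cv_eq_zero (q : ℕ) (hq : 2 ≤ q) : ∑ j ∈ Finset.range q, cv q j = 0 := by
  have hq0 : (q : ℝ) ≠ 0 := by positivity
  set z : ℂ := Complex.exp (2 * Real.pi * Complex.I / q) with hz
  have hz1 : z ≠ 1 := by
    rw [hz, Ne, Complex.exp_eq_one_iff]
    rintro ⟨m, hm⟩
    have hI : (2 * Real.pi * Complex.I) ≠ 0 := by
      simp [Complex.I_ne_zero, Real.pi_ne_zero]
    rw [div_eq_iff (by exact_mod_cast hq0 : (q : ℂ) ≠ 0)] at hm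
    have hm' : (1 : ℂ) = m * q := by
      have := hm
      field_simp at this ⊢
      have h2 : (2 * Real.pi * Complex.I) * 1 = (2 * Real.pi * Complex.I) * (m * q) := by
        rw [mul_one]; linear_combination hm
      exact mul_left_cancel₀ hI h2
    have : (1 : ℤ) = m * q := by exact_mod_cast hm'
    rcases le_or_gt m 0 with h | h
    · nlinarith [this, (by exact_mod_cast hq : (2:ℤ) ≤ q)]
    · nlinarith [this, (by exact_mod_cast hq : (2:ℤ) ≤ q), h]
  have hzq : z ^ q = 1 := by
    rw [hz, ← Complex.exp_nat_mul]
    have : (q : ℂ) * (2 * Real.pi * Complex.I / q) = 2 * Real.pi * Complex.I := by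
      rw [mul_div_assoc', mul_comm, mul_div_assoc, div_self (by exact_mod_cast hq0 : (q:ℂ) ≠ 0), mul_one]
    rw [this, Complex.exp_two_pi_mul_I]
  have hgeom : ∑ j ∈ Finset.range q, z ^ j = 0 := by
    rw [geom_sum_eq hz1, hzq]
    simp
  have hre : ∀ j : ℕ, (z ^ j).re = Real.cos (2 * Real.pi * j / q) := by
    intro j
    rw [hz, ← Complex.exp_nat_mul]
    have : (j : ℂ) * (2 * Real.pi * Complex.I / q) = ((2 * Real.pi * j / q : ℝ) : ℂ) * Complex.I := by
      push_cast
      field_simp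
    rw [this, Complex.exp_ofReal_mul_I_re]
  have := congrArg Complex.re hgeom
  rw [Complex.re_sum] at this
  simp only [hre, Complex.zero_re] at this
  unfold cv
  rw [← Finset.mul_sum, this, mul_zero]

lemma greedy1 (p m : ℝ) (hp : 0 ≤ p) (hm : m ≤ 0) (hpm : p - m ≤ 1) (N : ℕ) :
    ∃ x y : ℕ, x + y = N ∧ -1 < x * p + y * m ∧ x * p + y * m ≤ 0 := by
  induction N with
  | zero => exact ⟨0, 0, rfl, by norm_num, by norm_num⟩
  | succ N ih =>
      obtain ⟨x, y, hxy, h1, h2⟩ := ih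
      by_cases hc : (-1 : ℝ) < x * p + (y + 1) * m
      · refine ⟨x, y + 1, by omega, by push_cast; push_cast at hc; linarith, ?_⟩
        push_cast
        nlinarith
      · push_neg at hc
        refine ⟨x + 1, y, by omega, ?_, ?_⟩
        · push_cast
          nlinarith
        · push_cast
          nlinarith
lemma greedy2 (v p m : ℝ) (hv2 : -2 ≤ v) (hv1 : v ≤ -1) (hp : 0 ≤ p) (hm : m ≤ 0)
    (hpm : p - m ≤ 1) (N : ℕ) :
    ∃ x y : ℕ, x + y = N ∧ -2 ≤ v + (x * p + y * m) ∧ v + (x * p + y * m) ≤ -1 := by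
  induction N with
  | zero => exact ⟨0, 0, rfl, by norm_num; linarith, by norm_num; linarith⟩
  | succ N ih =>
      obtain ⟨x, y, hxy, h1, h2⟩ := ih
      by_cases hc : (-2 : ℝ) ≤ v + (x * p + (y + 1) * m)
      · refine ⟨x, y + 1, by omega, by push_cast; push_cast at hc; linarith, ?_⟩
        push_cast
        nlinarith
      · push_neg at hc
        refine ⟨x + 1, y, by omega, ?_, ?_⟩
        · push_cast
          nlinarith
        · push_cast
          nlinarith

lemma nat_div4_facts (q : ℕ) (hq : 13 ≤ q) :
    4 * (q / 4) ≤ q ∧ q ≤ 4 * (q / 4) + 3 ∧ 2 * (q / 4 + 1) ≤ q := by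
  have := Nat.div_add_mod q 4
  have h2 : q % 4 < 4 := Nat.mod_lt _ (by norm_num)
  omega

lemma largeq_good (q : ℕ) (hq : 13 ≤ q) (n : ℕ) (hn : 1 ≤ n) :
    (∃ s, achQ q n s ∧ -1 < s ∧ s ≤ 0) ∧ (∃ s, achQ q n s ∧ -2 ≤ s ∧ s ≤ -1) := by
  have hqR : (0 : ℝ) < q := by positivity
  have hpi := Real.pi_pos
  obtain ⟨h4u, h4u', h2u⟩ := nat_div4_facts q hq
  have h4uR : 4 * ((q / 4 : ℕ) : ℝ) ≤ q := by exact_mod_cast h4u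
  have h4uR' : (q : ℝ) ≤ 4 * ((q / 4 : ℕ) : ℝ) + 3 := by exact_mod_cast h4u'
  have h2uR : 2 * (((q / 4 : ℕ) : ℝ) + 1) ≤ q := by exact_mod_cast h2u
  have hcv : ∀ j : ℕ, cv q j = 2 * Real.cos (2 * Real.pi * j / q) := fun j => rfl
  have hsucc : ((q / 4 + 1 : ℕ) : ℝ) = ((q / 4 : ℕ) : ℝ) + 1 := by push_cast; ring
  have hx0 : (0:ℝ) ≤ 2 * Real.pi * ((q / 4 : ℕ) : ℝ) / q := by positivity
  have hxpi2 : 2 * Real.pi * ((q / 4 : ℕ) : ℝ) / q ≤ Real.pi / 2 := by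
    rw [div_le_iff₀ hqR]
    nlinarith
  have hy1 : Real.pi / 2 ≤ 2 * Real.pi * (((q / 4 : ℕ) : ℝ) + 1) / q := by
    rw [le_div_iff₀ hqR]
    nlinarith
  have hy2 : 2 * Real.pi * (((q / 4 : ℕ) : ℝ) + 1) / q ≤ Real.pi := by
    rw [div_le_iff₀ hqR]
    nlinarith
  have hp : 0 ≤ cv q (q / 4) := by
    have := Real.cos_nonneg_of_mem_Icc (x := 2 * Real.pi * ((q / 4 : ℕ) : ℝ) / q)
      ⟨by linarith, hxpi2⟩
    rw [hcv]
    linarith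
  have hm : cv q (q / 4 + 1) ≤ 0 := by
    have := Real.cos_nonpos_of_pi_div_two_le_of_le hy1 (by linarith)
    rw [hcv, hsucc]
    linarith
  have hpm : cv q (q / 4) - cv q (q / 4 + 1) ≤ 1 := by
    have hcc := Real.cos_sub_cos (2 * Real.pi * ((q / 4 : ℕ) : ℝ) / q)
      (2 * Real.pi * (((q / 4 : ℕ) : ℝ) + 1) / q)
    have hs1a : Real.sin ((2 * Real.pi * ((q / 4 : ℕ) : ℝ) / q
        + 2 * Real.pi * (((q / 4 : ℕ) : ℝ) + 1) / q) / 2) ≤ 1 := Real.sin_le_one _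
    have hs1b : 0 ≤ Real.sin ((2 * Real.pi * ((q / 4 : ℕ) : ℝ) / q
        + 2 * Real.pi * (((q / 4 : ℕ) : ℝ) + 1) / q) / 2) :=
      Real.sin_nonneg_of_nonneg_of_le_pi (by positivity) (by linarith)
    have harg : (2 * Real.pi * ((q / 4 : ℕ) : ℝ) / q
        - 2 * Real.pi * (((q / 4 : ℕ) : ℝ) + 1) / q) / 2 = -(Real.pi / q) := by
      field_simp
      ring
    have hsinb : Real.sin (Real.pi / q) ≤ Real.pi / q := Real.sin_le (by positivity)
    have hsinnn : 0 ≤ Real.sin (Real.pi / q) :=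
      Real.sin_nonneg_of_nonneg_of_le_pi (by positivity)
        (by rw [div_le_iff₀ hqR]; nlinarith)
    have hq315 : 4 * Real.pi ≤ q := by
      have h1 := Real.pi_lt_d2
      have h2 : (13 : ℝ) ≤ q := by exact_mod_cast hq
      nlinarith
    have hpiq : Real.pi / q ≤ 1 / 4 := by
      rw [div_le_iff₀ hqR]
      nlinarith
    rw [harg, Real.sin_neg] at hcc
    rw [hcv, hcv, hsucc]
    nlinarith [hcc, hs1a, hs1b, hsinb, hsinnn, hpiq,
      mul_nonneg (sub_nonneg.mpr hs1a) hsinnn]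
  constructor
  · obtain ⟨a, b, hab, hg1, hg2⟩ := greedy1 (cv q (q / 4)) (cv q (q / 4 + 1)) hp hm
      (by linarith) n
    refine ⟨a * cv q (q / 4) + b * cv q (q / 4 + 1), ?_, hg1, hg2⟩
    have h1 := achQ_nsmul (achQ_single q (q / 4)) a
    have h2 := achQ_nsmul (achQ_single q (q / 4 + 1)) b
    have := achQ_add h1 h2
    simpa [hab] using this
  · have h3t : q ≤ 3 * ((q + 2) / 3) ∧ 2 * ((q + 2) / 3) ≤ q := by
      have := Nat.div_add_mod (q + 2) 3
      have h2 : (q + 2) % 3 < 3 := Nat.mod_lt _ (by norm_num)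
      omega
    have h3tR : (q : ℝ) ≤ 3 * (((q + 2) / 3 : ℕ) : ℝ) := by exact_mod_cast h3t.1
    have h2tR : 2 * (((q + 2) / 3 : ℕ) : ℝ) ≤ q := by exact_mod_cast h3t.2
    have hφ1 : 2 * Real.pi / 3 ≤ 2 * Real.pi * (((q + 2) / 3 : ℕ) : ℝ) / q := by
      rw [div_le_div_iff₀ (by norm_num) hqR]
      nlinarith
    have hφ2 : 2 * Real.pi * (((q + 2) / 3 : ℕ) : ℝ) / q ≤ Real.pi := by
      rw [div_le_iff₀ hqR]
      nlinarith
    have hv1 : cv q ((q + 2) / 3) ≤ -1 := by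
      have hcos : Real.cos (2 * Real.pi * (((q + 2) / 3 : ℕ) : ℝ) / q)
          ≤ Real.cos (2 * Real.pi / 3) :=
        Real.cos_le_cos_of_nonneg_of_le_pi (by positivity) hφ2 hφ1
      have h23 : Real.cos (2 * Real.pi / 3) = -(1 / 2) := by
        rw [show (2 * Real.pi / 3) = Real.pi - Real.pi / 3 by ring, Real.cos_pi_sub,
          Real.cos_pi_div_three]
      rw [hcv]
      rw [h23] at hcos
      linarith
    have hv2 : -2 ≤ cv q ((q + 2) / 3) := by
      rw [hcv]
      nlinarith [Real.neg_one_le_cos (2 * Real.pi * (((q + 2) / 3 : ℕ) : ℝ) / q)]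
    obtain ⟨a, b, hab, hg1, hg2⟩ := greedy2 (cv q ((q + 2) / 3)) (cv q (q / 4))
      (cv q (q / 4 + 1)) hv2 hv1 hp hm (by linarith) (n - 1)
    refine ⟨cv q ((q + 2) / 3) + (a * cv q (q / 4) + b * cv q (q / 4 + 1)), ?_, hg1, hg2⟩
    have h1 := achQ_nsmul (achQ_single q (q / 4)) a
    have h2 := achQ_nsmul (achQ_single q (q / 4 + 1)) b
    have hadd := achQ_add (achQ_single q ((q + 2) / 3)) (achQ_add h1 h2)
    have hn' : 1 + (a + b) = n := by omega
    simpa [hn'] using hadd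

lemma cv_eq (q j : ℕ) : cv q j = 2 * Real.cos (2 * Real.pi * (j : ℝ) / (q : ℝ)) := rfl

lemma cv_val {q j : ℕ} (x : ℝ) (hx : 2 * Real.pi * (j : ℝ) / (q : ℝ) = x) :
    cv q j = 2 * Real.cos x := by rw [cv_eq, hx]

lemma achQ_pad {q z r n : ℕ} {s : ℝ} (h0 : achQ q z 0) (hr : achQ q r s) (t : ℕ)
    (hn : n = t * z + r) : achQ q n s := by
  subst hn
  simpa using achQ_add (achQ_nsmul h0 t) hr

lemma achQ_full (q : ℕ) (hq : 2 ≤ q) : achQ q q 0 :=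
  ⟨fun i => i, by rw [Fin.sum_univ_eq_sum_range]; exact sum_cv_eq_zero q hq⟩

lemma cv_symm (q j : ℕ) (h : j ≤ q) (hq : q ≠ 0) : cv q (q - j) = cv q j := by
  have hqR : ((q : ℝ)) ≠ 0 := by positivity
  rw [cv_eq, cv_eq]
  rw [show ((q - j : ℕ) : ℝ) = (q : ℝ) - j from by push_cast [h]; ring]
  rw [show 2 * Real.pi * ((q : ℝ) - j) / q = 2 * Real.pi - 2 * Real.pi * j / q from by
    field_simp]
  rw [Real.cos_two_pi_sub]

lemma cv_zero (q : ℕ) (hq : q ≠ 0) : cv q 0 = 2 := by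
  rw [cv_eq]
  simp

-- specific values
lemma cv41 : cv 4 1 = 0 := by
  rw [cv_val (Real.pi / 2) (by push_cast; ring), Real.cos_pi_div_two, mul_zero]

lemma cv42 : cv 4 2 = -2 := by
  rw [cv_val Real.pi (by push_cast; ring), Real.cos_pi]; ring

lemma cv61 : cv 6 1 = 1 := by
  rw [cv_val (Real.pi / 3) (by push_cast; ring), Real.cos_pi_div_three]; ring

lemma cos_two_pi_div_three : Real.cos (2 * Real.pi / 3) = -(1/2) := by
  rw [show 2 * Real.pi / 3 = Real.pi - Real.pi / 3 by ring, Real.cos_pi_sub,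
    Real.cos_pi_div_three]

lemma cv62 : cv 6 2 = -1 := by
  rw [cv_val (2 * Real.pi / 3) (by push_cast; ring), cos_two_pi_div_three]; ring

lemma cv63 : cv 6 3 = -2 := by
  rw [cv_val Real.pi (by push_cast; ring), Real.cos_pi]; ring

lemma cv82 : cv 8 2 = 0 := by
  rw [cv_val (Real.pi / 2) (by push_cast; ring), Real.cos_pi_div_two, mul_zero]

lemma cv83 : cv 8 3 = -Real.sqrt 2 := by
  rw [cv_val (3 * Real.pi / 4) (by push_cast; ring),
    show 3 * Real.pi / 4 = Real.pi - Real.pi / 4 by ring, Real.cos_pi_sub,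
    Real.cos_pi_div_four]
  ring

lemma cv123 : cv 12 3 = 0 := by
  rw [cv_val (Real.pi / 2) (by push_cast; ring), Real.cos_pi_div_two, mul_zero]

lemma cv124 : cv 12 4 = -1 := by
  rw [cv_val (2 * Real.pi / 3) (by push_cast; ring), cos_two_pi_div_three]; ring

lemma cos_two_pi_div_five : Real.cos (2 * Real.pi / 5) = (Real.sqrt 5 - 1) / 4 := by
  have h5 : Real.sqrt 5 ^ 2 = 5 := Real.sq_sqrt (by norm_num)
  rw [show 2 * Real.pi / 5 = 2 * (Real.pi / 5) by ring, Real.cos_two_mul,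
    Real.cos_pi_div_five]
  linear_combination h5 / 8

lemma cos_four_pi_div_five : Real.cos (4 * Real.pi / 5) = -((1 + Real.sqrt 5) / 4) := by
  rw [show 4 * Real.pi / 5 = Real.pi - Real.pi / 5 by ring, Real.cos_pi_sub,
    Real.cos_pi_div_five]

lemma cv51 : cv 5 1 = (Real.sqrt 5 - 1) / 2 := by
  rw [cv_val (2 * Real.pi / 5) (by push_cast; ring), cos_two_pi_div_five]; ring

lemma cv52 : cv 5 2 = -((Real.sqrt 5 + 1) / 2) := by
  rw [cv_val (4 * Real.pi / 5) (by push_cast; ring), cos_four_pi_div_five]; ring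

lemma cv102 : cv 10 2 = (Real.sqrt 5 - 1) / 2 := by
  rw [cv_val (2 * Real.pi / 5) (by push_cast; ring), cos_two_pi_div_five]; ring

lemma cv103 : cv 10 3 = -((Real.sqrt 5 - 1) / 2) := by
  rw [cv_val (3 * Real.pi / 5) (by push_cast; ring),
    show 3 * Real.pi / 5 = Real.pi - 2 * Real.pi / 5 by ring, Real.cos_pi_sub,
    cos_two_pi_div_five]
  ring

lemma cv105 : cv 10 5 = -2 := by
  rw [cv_val Real.pi (by push_cast; ring), Real.cos_pi]; ring

lemma cv93 : cv 9 3 = -1 := by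
  rw [cv_val (2 * Real.pi / 3) (by push_cast; ring), cos_two_pi_div_three]; ring

lemma sqrt5_bounds : 2.2 < Real.sqrt 5 ∧ Real.sqrt 5 < 2.3 := by
  have h5 : Real.sqrt 5 ^ 2 = 5 := Real.sq_sqrt (by norm_num)
  have h0 : 0 ≤ Real.sqrt 5 := Real.sqrt_nonneg 5
  constructor <;> nlinarith

lemma sqrt2_bounds : 1.4 < Real.sqrt 2 ∧ Real.sqrt 2 < 1.42 := by
  have h2 : Real.sqrt 2 ^ 2 = 2 := Real.sq_sqrt (by norm_num)
  have h0 : 0 ≤ Real.sqrt 2 := Real.sqrt_nonneg 2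
  constructor <;> nlinarith

def good1 (q n : ℕ) : Prop := ∃ s, achQ q n s ∧ -1 < s ∧ s ≤ 0
def good2 (q n : ℕ) : Prop := ∃ s, achQ q n s ∧ -2 ≤ s ∧ s ≤ -1

lemma q4_good (n : ℕ) (hn : 1 ≤ n) : good1 4 n ∧ good2 4 n := by
  have hz : achQ 4 1 0 := by simpa [cv41] using achQ_single 4 1
  constructor
  · exact ⟨0, achQ_pad hz (achQ_zero 4) n (by omega), by norm_num, by norm_num⟩
  · refine ⟨-2, achQ_pad hz (by simpa [cv42] using achQ_single 4 2) (n - 1) (by omega),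
      by norm_num, by norm_num⟩

lemma q8_good (n : ℕ) (hn : 1 ≤ n) : good1 8 n ∧ good2 8 n := by
  have hz : achQ 8 1 0 := by simpa [cv82] using achQ_single 8 2
  obtain ⟨h2a, h2b⟩ := sqrt2_bounds
  constructor
  · exact ⟨0, achQ_pad hz (achQ_zero 8) n (by omega), by norm_num, by norm_num⟩
  · refine ⟨-Real.sqrt 2,
      achQ_pad hz (by simpa [cv83] using achQ_single 8 3) (n - 1) (by omega), ?_, ?_⟩
    · linarith
    · linarith

lemma q12_good (n : ℕ) (hn : 1 ≤ n) : good1 12 n ∧ good2 12 n := by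
  have hz : achQ 12 1 0 := by simpa [cv123] using achQ_single 12 3
  constructor
  · exact ⟨0, achQ_pad hz (achQ_zero 12) n (by omega), by norm_num, by norm_num⟩
  · exact ⟨-1, achQ_pad hz (by simpa [cv124] using achQ_single 12 4) (n - 1) (by omega),
      by norm_num, by norm_num⟩

lemma q6_good (n : ℕ) (hn : 2 ≤ n) : good1 6 n ∧ good2 6 n := by
  have hz : achQ 6 2 0 := by
    have := achQ_add (achQ_single 6 1) (achQ_single 6 2)
    rw [cv61, cv62] at this
    simpa using this
  obtain ⟨t, ht⟩ : ∃ t, n = t * 2 + 2 ∨ n = t * 2 + 3 := ⟨(n - 2) / 2, by omega⟩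
  constructor
  · rcases ht with h | h
    · exact ⟨0, achQ_pad hz hz t h, by norm_num, by norm_num⟩
    · have b3 : achQ 6 3 0 := by
        have := achQ_add (achQ_single 6 0) (achQ_add (achQ_single 6 2) (achQ_single 6 2))
        rw [cv62, cv_zero 6 (by norm_num)] at this
        norm_num at this
        exact this
      exact ⟨0, achQ_pad hz b3 t h, by norm_num, by norm_num⟩
  · rcases ht with h | h
    · have b2 : achQ 6 2 (-2) := by
        have := achQ_add (achQ_single 6 2) (achQ_single 6 2)
        rw [cv62] at this
        norm_num at this
        exact this
      exact ⟨-2, achQ_pad hz b2 t h, by norm_num, by norm_num⟩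
    · have b3 : achQ 6 3 (-1) := by
        have := achQ_add (achQ_single 6 2) hz
        rw [cv62] at this
        simpa using this
      exact ⟨-1, achQ_pad hz b3 t h, by norm_num, by norm_num⟩

lemma q10_good (n : ℕ) (hn : 1 ≤ n) : good1 10 n ∧ good2 10 n := by
  obtain ⟨h5a, h5b⟩ := sqrt5_bounds
  have hz : achQ 10 2 0 := by
    have := achQ_add (achQ_single 10 2) (achQ_single 10 3)
    rw [cv102, cv103] at this
    simpa using this
  obtain ⟨t, ht⟩ : ∃ t, n = t * 2 + 1 ∨ n = t * 2 + 2 := ⟨(n - 1) / 2, by omega⟩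
  constructor
  · rcases ht with h | h
    · refine ⟨-((Real.sqrt 5 - 1) / 2),
        achQ_pad hz (by simpa [cv103] using achQ_single 10 3) t h, by linarith, by linarith⟩
    · exact ⟨0, achQ_pad hz hz t h, by norm_num, by norm_num⟩
  · rcases ht with h | h
    · exact ⟨-2, achQ_pad hz (by simpa [cv105] using achQ_single 10 5) t h,
        by norm_num, by norm_num⟩
    · have b2 : achQ 10 2 (-2 + (Real.sqrt 5 - 1) / 2) := by
        have := achQ_add (achQ_single 10 5) (achQ_single 10 2)
        rw [cv105, cv102] at this
        exact this
      exact ⟨-2 + (Real.sqrt 5 - 1) / 2, achQ_pad hz b2 t h, by linarith, by linarith⟩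

lemma q5_good (n : ℕ) (hn : 3 ≤ n) : good1 5 n ∧ good2 5 n := by
  obtain ⟨h5a, h5b⟩ := sqrt5_bounds
  have hz : achQ 5 5 0 := achQ_full 5 (by norm_num)
  have h50 : cv 5 0 = 2 := cv_zero 5 (by norm_num)
  obtain ⟨t, ht⟩ : ∃ t, n = t * 5 + 3 ∨ n = t * 5 + 4 ∨ n = t * 5 + 5 ∨ n = t * 5 + 6
      ∨ n = t * 5 + 7 := ⟨(n - 3) / 5, by omega⟩
  constructor
  · rcases ht with h | h | h | h | h
    · -- (1,1,2) : 2x + y = (√5-3)/2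
      have b : achQ 5 3 (cv 5 1 + (cv 5 1 + cv 5 2)) :=
        achQ_add (achQ_single 5 1) (achQ_add (achQ_single 5 1) (achQ_single 5 2))
      rw [cv51, cv52] at b
      exact ⟨_, achQ_pad hz b t h, by linarith, by linarith⟩
    · -- (0,1,2,2) : 2 + x + 2y = (1-√5)/2
      have b : achQ 5 4 (cv 5 0 + (cv 5 1 + (cv 5 2 + cv 5 2))) :=
        achQ_add (achQ_single 5 0) (achQ_add (achQ_single 5 1)
          (achQ_add (achQ_single 5 2) (achQ_single 5 2)))
      rw [cv51, cv52, h50] at b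
      exact ⟨_, achQ_pad hz b t h, by linarith, by linarith⟩
    · exact ⟨0, achQ_pad hz hz t h, by norm_num, by norm_num⟩
    · -- (0,0,1,2,2,2) : 4 + x + 3y = 2 - √5
      have b : achQ 5 6 (cv 5 0 + (cv 5 0 + (cv 5 1 + (cv 5 2 + (cv 5 2 + cv 5 2))))) :=
        achQ_add (achQ_single 5 0) (achQ_add (achQ_single 5 0) (achQ_add (achQ_single 5 1)
          (achQ_add (achQ_single 5 2) (achQ_add (achQ_single 5 2) (achQ_single 5 2)))))
      rw [cv51, cv52, h50] at b
      exact ⟨_, achQ_pad hz b t h, by linarith, by linarith⟩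
    · -- (0,0,0,2,2,2,2) : 6 + 4y = 4 - 2√5
      have b : achQ 5 7 (cv 5 0 + (cv 5 0 + (cv 5 0 + (cv 5 2 + (cv 5 2 + (cv 5 2
          + cv 5 2)))))) :=
        achQ_add (achQ_single 5 0) (achQ_add (achQ_single 5 0) (achQ_add (achQ_single 5 0)
          (achQ_add (achQ_single 5 2) (achQ_add (achQ_single 5 2)
            (achQ_add (achQ_single 5 2) (achQ_single 5 2))))))
      rw [cv52, h50] at b
      exact ⟨_, achQ_pad hz b t h, by linarith, by linarith⟩
  · rcases ht with h | h | h | h | h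
    · -- (0,2,2) : 2 + 2y = 1 - √5
      have b : achQ 5 3 (cv 5 0 + (cv 5 2 + cv 5 2)) :=
        achQ_add (achQ_single 5 0) (achQ_add (achQ_single 5 2) (achQ_single 5 2))
      rw [cv52, h50] at b
      exact ⟨_, achQ_pad hz b t h, by linarith, by linarith⟩
    · -- (1,2,1,2) : -2
      have b : achQ 5 4 (cv 5 1 + (cv 5 2 + (cv 5 1 + cv 5 2))) :=
        achQ_add (achQ_single 5 1) (achQ_add (achQ_single 5 2)
          (achQ_add (achQ_single 5 1) (achQ_single 5 2)))
      rw [cv51, cv52] at b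
      exact ⟨_, achQ_pad hz b t h, by linarith, by linarith⟩
    · -- (1,1,1,2,2) : (√5-5)/2
      have b : achQ 5 5 (cv 5 1 + (cv 5 1 + (cv 5 1 + (cv 5 2 + cv 5 2)))) :=
        achQ_add (achQ_single 5 1) (achQ_add (achQ_single 5 1) (achQ_add (achQ_single 5 1)
          (achQ_add (achQ_single 5 2) (achQ_single 5 2))))
      rw [cv51, cv52] at b
      exact ⟨_, achQ_pad hz b t h, by linarith, by linarith⟩
    · -- (0,1,1,2,2,2) : -(1+√5)/2
      have b : achQ 5 6 (cv 5 0 + (cv 5 1 + (cv 5 1 + (cv 5 2 + (cv 5 2 + cv 5 2))))) :=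
        achQ_add (achQ_single 5 0) (achQ_add (achQ_single 5 1) (achQ_add (achQ_single 5 1)
          (achQ_add (achQ_single 5 2) (achQ_add (achQ_single 5 2) (achQ_single 5 2)))))
      rw [cv51, cv52, h50] at b
      exact ⟨_, achQ_pad hz b t h, by linarith, by linarith⟩
    · -- 5-block + (1,2) : -1
      have b : achQ 5 7 (0 + (cv 5 1 + cv 5 2)) :=
        achQ_add hz (achQ_add (achQ_single 5 1) (achQ_single 5 2))
      rw [cv51, cv52] at b
      exact ⟨_, achQ_pad hz b t h, by linarith, by linarith⟩

lemma q9_facts : cv 9 1 + cv 9 2 + cv 9 4 = 0 ∧ (0 < cv 9 2 ∧ cv 9 2 < 1)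
    ∧ (-2 ≤ cv 9 4 ∧ cv 9 4 < -1) := by
  have hpi := Real.pi_pos
  refine ⟨?_, ⟨?_, ?_⟩, ⟨?_, ?_⟩⟩
  · have hsum := sum_cv_eq_zero 9 (by norm_num)
    have e8 : cv 9 8 = cv 9 1 := by simpa using cv_symm 9 1 (by norm_num) (by norm_num)
    have e7 : cv 9 7 = cv 9 2 := by simpa using cv_symm 9 2 (by norm_num) (by norm_num)
    have e6 : cv 9 6 = cv 9 3 := by simpa using cv_symm 9 3 (by norm_num) (by norm_num)
    have e5 : cv 9 5 = cv 9 4 := by simpa using cv_symm 9 4 (by norm_num) (by norm_num)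
    simp only [Finset.sum_range_succ, Finset.sum_range_zero] at hsum
    rw [e8, e7, e6, e5, cv93, cv_zero 9 (by norm_num)] at hsum
    linarith
  · rw [cv_val (4 * Real.pi / 9) (by push_cast; ring)]
    have : 0 < Real.cos (4 * Real.pi / 9) :=
      Real.cos_pos_of_mem_Ioo ⟨by linarith, by linarith⟩
    linarith
  · rw [cv_val (4 * Real.pi / 9) (by push_cast; ring)]
    have hlt : Real.cos (4 * Real.pi / 9) < Real.cos (Real.pi / 3) :=
      Real.cos_lt_cos_of_nonneg_of_le_pi (by positivity) (by linarith) (by linarith)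
    rw [Real.cos_pi_div_three] at hlt
    linarith
  · rw [cv_val (8 * Real.pi / 9) (by push_cast; ring)]
    nlinarith [Real.neg_one_le_cos (8 * Real.pi / 9)]
  · rw [cv_val (8 * Real.pi / 9) (by push_cast; ring)]
    have hlt : Real.cos (8 * Real.pi / 9) < Real.cos (2 * Real.pi / 3) :=
      Real.cos_lt_cos_of_nonneg_of_le_pi (by positivity) (by linarith) (by linarith)
    rw [cos_two_pi_div_three] at hlt
    linarith

lemma q9_good (n : ℕ) (hn : 2 ≤ n) : good1 9 n ∧ good2 9 n := by
  obtain ⟨hsum, ⟨h2a, h2b⟩, ⟨h4a, h4b⟩⟩ := q9_facts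
  have hz : achQ 9 3 0 := by
    have := achQ_add (achQ_single 9 1) (achQ_add (achQ_single 9 2) (achQ_single 9 4))
    rw [show cv 9 1 + (cv 9 2 + cv 9 4) = 0 by linarith] at this
    exact this
  constructor
  · obtain ⟨t, ht⟩ : ∃ t, n = t * 3 + 2 ∨ n = t * 3 + 3 ∨ n = t * 3 + 4 :=
      ⟨(n - 2) / 3, by omega⟩
    rcases ht with h | h | h
    · have b : achQ 9 2 (cv 9 2 + cv 9 3) := achQ_add (achQ_single 9 2) (achQ_single 9 3)
      rw [cv93] at b
      exact ⟨_, achQ_pad hz b t h, by linarith, by linarith⟩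
    · exact ⟨0, achQ_pad hz hz t h, by norm_num, by norm_num⟩
    · have b : achQ 9 4 (cv 9 1 + (cv 9 2 + (cv 9 3 + cv 9 3))) :=
        achQ_add (achQ_single 9 1) (achQ_add (achQ_single 9 2)
          (achQ_add (achQ_single 9 3) (achQ_single 9 3)))
      rw [cv93] at b
      exact ⟨_, achQ_pad hz b t h, by linarith, by linarith⟩
  · obtain ⟨t, ht⟩ : ∃ t, n = t * 3 + 1 ∨ n = t * 3 + 2 ∨ n = t * 3 + 3 :=
      ⟨(n - 1) / 3, by omega⟩
    rcases ht with h | h | h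
    · exact ⟨-1, achQ_pad hz (by simpa [cv93] using achQ_single 9 3) t h,
        by norm_num, by norm_num⟩
    · have b : achQ 9 2 ((-1) + (-1)) := by
        have := achQ_add (achQ_single 9 3) (achQ_single 9 3)
        rwa [cv93] at this
      exact ⟨_, achQ_pad hz b t h, by norm_num, by norm_num⟩
    · have b : achQ 9 3 ((-1) + ((-1) + cv 9 2)) := by
        have := achQ_add (achQ_single 9 3) (achQ_add (achQ_single 9 3) (achQ_single 9 2))
        rwa [cv93] at this
      exact ⟨_, achQ_pad hz b t h, by linarith, by linarith⟩


lemma mul_sign_pos {a b r : ℝ} (h : a * b = r) (hb : 0 < b) (hr : 0 < r) : 0 < a := by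
  nlinarith
lemma mul_sign_neg {a b r : ℝ} (h : a * b = r) (hb : 0 < b) (hr : r < 0) : a < 0 := by
  nlinarith
lemma mul_sign_pos' {a b r : ℝ} (h : a * b = r) (hb : b < 0) (hr : r < 0) : 0 < a := by
  nlinarith
lemma mul_sign_neg' {a b r : ℝ} (h : a * b = r) (hb : b < 0) (hr : 0 < r) : a < 0 := by
  nlinarith

lemma cubic7 (j : ℕ) (hj1 : 1 ≤ j) (hj3 : j ≤ 3) :
    (cv 7 j)^3 + (cv 7 j)^2 - 2*(cv 7 j) - 1 = 0 := by
  have hpi := Real.pi_pos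
  have hjR1 : (1 : ℝ) ≤ j := by exact_mod_cast hj1
  have hjR3 : (j : ℝ) ≤ 3 := by exact_mod_cast hj3
  set θ : ℝ := 2 * Real.pi * (j : ℝ) / 7 with hθ
  have hθpos : 0 < θ := by rw [hθ]; positivity
  have hθpi : θ ≤ Real.pi := by
    rw [hθ, div_le_iff₀ (by norm_num : (0:ℝ) < 7)]
    nlinarith
  have h2 : Real.cos (2*θ) = 2*Real.cos θ^2 - 1 := Real.cos_two_mul θ
  have h3 : Real.cos (3*θ) = 4*Real.cos θ^3 - 3*Real.cos θ := Real.cos_three_mul θ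
  have h4 : Real.cos (4*θ) = 2*Real.cos (2*θ)^2 - 1 := by
    rw [show (4:ℝ)*θ = 2*(2*θ) by ring]
    exact Real.cos_two_mul _
  have heq : Real.cos (4*θ) = Real.cos (3*θ) := by
    rw [show (4:ℝ)*θ = (j:ℤ)*(2*Real.pi) - 3*θ by rw [hθ]; push_cast; ring]
    exact Real.cos_int_mul_two_pi_sub _ _
  have hc1 : Real.cos θ < 1 := by
    have := Real.cos_lt_cos_of_nonneg_of_le_pi (le_refl 0) hθpi hθpos
    rwa [Real.cos_zero] at this
  have hfac : (Real.cos θ - 1) * (8*Real.cos θ^3 + 4*Real.cos θ^2 - 4*Real.cos θ - 1)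
      = 0 := by linear_combination heq - h4 + h3 - 2*(Real.cos (2*θ) + 2*Real.cos θ^2 - 1)*h2
  have hcu : 8*Real.cos θ^3 + 4*Real.cos θ^2 - 4*Real.cos θ - 1 = 0 := by
    rcases mul_eq_zero.mp hfac with h | h
    · exact absurd h (by intro hh; linarith)
    · exact h
  have hcv : cv 7 j = 2 * Real.cos θ := by rw [cv_eq, hθ]; norm_num
  rw [hcv]
  linear_combination hcu

lemma q7_pins : (1.24 < cv 7 1 ∧ cv 7 1 < 1.25) ∧ (-0.45 < cv 7 2 ∧ cv 7 2 < -0.44)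
    ∧ (-1.81 < cv 7 3 ∧ cv 7 3 < -1.80) := by
  have hpi := Real.pi_pos
  obtain ⟨s2a, s2b⟩ := sqrt2_bounds
  -- coarse bounds
  have hco1 : 1 < cv 7 1 ∧ cv 7 1 < Real.sqrt 2 := by
    rw [cv_val (2 * Real.pi / 7) (by push_cast; ring)]
    constructor
    · have h := Real.cos_lt_cos_of_nonneg_of_le_pi (by positivity)
        (by linarith : Real.pi / 3 ≤ Real.pi) (by linarith : 2 * Real.pi / 7 < Real.pi / 3)
      rw [Real.cos_pi_div_three] at h
      linarith
    · have h := Real.cos_lt_cos_of_nonneg_of_le_pi (by positivity)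
        (by linarith : 2 * Real.pi / 7 ≤ Real.pi) (by linarith : Real.pi / 4 < 2 * Real.pi / 7)
      rw [Real.cos_pi_div_four] at h
      nlinarith [Real.sq_sqrt (by norm_num : (0:ℝ) ≤ 2), Real.sqrt_nonneg 2]
  have hco2 : -1 < cv 7 2 ∧ cv 7 2 < 0 := by
    rw [cv_val (4 * Real.pi / 7) (by push_cast; ring)]
    constructor
    · have h := Real.cos_lt_cos_of_nonneg_of_le_pi (by positivity)
        (by linarith : 2 * Real.pi / 3 ≤ Real.pi) (by linarith : 4 * Real.pi / 7 < 2 * Real.pi / 3)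
      rw [cos_two_pi_div_three] at h
      linarith
    · have h := Real.cos_lt_cos_of_nonneg_of_le_pi (by positivity)
        (by linarith : 4 * Real.pi / 7 ≤ Real.pi) (by linarith : Real.pi / 2 < 4 * Real.pi / 7)
      rw [Real.cos_pi_div_two] at h
      linarith
  have hco3 : -2 ≤ cv 7 3 ∧ cv 7 3 < -1 := by
    rw [cv_val (6 * Real.pi / 7) (by push_cast; ring)]
    constructor
    · nlinarith [Real.neg_one_le_cos (6 * Real.pi / 7)]
    · have h := Real.cos_lt_cos_of_nonneg_of_le_pi (by positivity)
        (by linarith : 6 * Real.pi / 7 ≤ Real.pi) (by linarith : 2 * Real.pi / 3 < 6 * Real.pi / 7)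
      rw [cos_two_pi_div_three] at h
      linarith
  have hq1 := cubic7 1 (by norm_num) (by norm_num)
  have hq2 := cubic7 2 (by norm_num) (by norm_num)
  have hq3 := cubic7 3 (by norm_num) (by norm_num)
  refine ⟨⟨?_, ?_⟩, ⟨?_, ?_⟩, ⟨?_, ?_⟩⟩
  · set v := cv 7 1 with hv
    have key : (v - 1.24) * (v^2 + 2.24*v + 0.7776) = 0.035776 := by linear_combination hq1
    have hQ : 0 < v^2 + 2.24*v + 0.7776 := by nlinarith [hco1.1, hco1.2]
    have := mul_sign_pos key hQ (by norm_num)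
    linarith
  · set v := cv 7 1 with hv
    have key : (v - 1.25) * (v^2 + 2.25*v + 0.8125) = -0.015625 := by linear_combination hq1
    have hQ : 0 < v^2 + 2.25*v + 0.8125 := by nlinarith [hco1.1, hco1.2]
    have := mul_sign_neg key hQ (by norm_num)
    linarith
  · set v := cv 7 2 with hv
    have key : (v + 0.45) * (v^2 + 0.55*v - 2.2475) = -0.011375 := by linear_combination hq2
    have hQ : v^2 + 0.55*v - 2.2475 < 0 := by nlinarith [hco2.1, hco2.2]
    have := mul_sign_pos' key hQ (by norm_num)
    linarith
  · set v := cv 7 2 with hv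
    have key : (v + 0.44) * (v^2 + 0.56*v - 2.2464) = 0.011584 := by linear_combination hq2
    have hQ : v^2 + 0.56*v - 2.2464 < 0 := by nlinarith [hco2.1, hco2.2]
    have := mul_sign_neg' key hQ (by norm_num)
    linarith
  · set v := cv 7 3 with hv
    have key : (v + 1.81) * (v^2 - 0.81*v - 0.5339) = 0.033641 := by linear_combination hq3
    have hQ : 0 < v^2 - 0.81*v - 0.5339 := by nlinarith [hco3.1, hco3.2]
    have := mul_sign_pos key hQ (by norm_num)
    linarith
  · set v := cv 7 3 with hv
    have key : (v + 1.80) * (v^2 - 0.80*v - 0.56) = -0.008 := by linear_combination hq3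
    have hQ : 0 < v^2 - 0.80*v - 0.56 := by nlinarith [hco3.1, hco3.2]
    have := mul_sign_neg key hQ (by norm_num)
    linarith

lemma sum7 : cv 7 1 + cv 7 2 + cv 7 3 = -1 := by
  have hsum := sum_cv_eq_zero 7 (by norm_num)
  have e6 : cv 7 6 = cv 7 1 := by simpa using cv_symm 7 1 (by norm_num) (by norm_num)
  have e5 : cv 7 5 = cv 7 2 := by simpa using cv_symm 7 2 (by norm_num) (by norm_num)
  have e4 : cv 7 4 = cv 7 3 := by simpa using cv_symm 7 3 (by norm_num) (by norm_num)
  simp only [Finset.sum_range_succ, Finset.sum_range_zero] at hsum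
  rw [e6, e5, e4, cv_zero 7 (by norm_num)] at hsum
  linarith

lemma q7_good (n : ℕ) (hn : n = 1 ∨ 3 ≤ n) : good1 7 n ∧ good2 7 n := by
  obtain ⟨⟨a1, a2⟩, ⟨b1, b2⟩, ⟨c1, c2⟩⟩ := q7_pins
  have hsum := sum7
  have hz : achQ 7 7 0 := achQ_full 7 (by norm_num)
  have h70 : cv 7 0 = 2 := cv_zero 7 (by norm_num)
  obtain ⟨t, ht⟩ : ∃ t, n = t * 7 + 1 ∨ n = t * 7 + 3 ∨ n = t * 7 + 4 ∨ n = t * 7 + 5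
      ∨ n = t * 7 + 6 ∨ n = t * 7 + 7 ∨ n = t * 7 + 8 ∨ n = t * 7 + 9 := by
    rcases hn with h1 | h3
    · exact ⟨0, by omega⟩
    · exact ⟨(n - 3) / 7, by omega⟩
  constructor
  · rcases ht with h | h | h | h | h | h | h | h
    · exact ⟨_, achQ_pad hz (achQ_single 7 2) t h, by linarith, by linarith⟩
    · have b : achQ 7 3 (cv 7 0 + (cv 7 2 + cv 7 3)) :=
        achQ_add (achQ_single 7 0) (achQ_add (achQ_single 7 2) (achQ_single 7 3))
      rw [h70] at b
      exact ⟨_, achQ_pad hz b t h, by linarith, by linarith⟩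
    · have b : achQ 7 4 (cv 7 0 + (cv 7 2 + (cv 7 2 + cv 7 3))) :=
        achQ_add (achQ_single 7 0) (achQ_add (achQ_single 7 2)
          (achQ_add (achQ_single 7 2) (achQ_single 7 3)))
      rw [h70] at b
      exact ⟨_, achQ_pad hz b t h, by linarith, by linarith⟩
    · have b : achQ 7 5 (cv 7 0 + (cv 7 1 + (cv 7 2 + (cv 7 3 + cv 7 3)))) :=
        achQ_add (achQ_single 7 0) (achQ_add (achQ_single 7 1) (achQ_add (achQ_single 7 2)
          (achQ_add (achQ_single 7 3) (achQ_single 7 3))))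
      rw [h70] at b
      exact ⟨_, achQ_pad hz b t h, by linarith, by linarith⟩
    · have b : achQ 7 6 ((cv 7 0 + (cv 7 2 + cv 7 3)) + (cv 7 0 + (cv 7 2 + cv 7 3))) := by
        have b3 : achQ 7 3 (cv 7 0 + (cv 7 2 + cv 7 3)) :=
          achQ_add (achQ_single 7 0) (achQ_add (achQ_single 7 2) (achQ_single 7 3))
        exact achQ_add b3 b3
      rw [h70] at b
      exact ⟨_, achQ_pad hz b t h, by linarith, by linarith⟩
    · exact ⟨0, achQ_pad hz hz t h, by norm_num, by norm_num⟩
    · have b : achQ 7 8 (0 + cv 7 2) := achQ_add hz (achQ_single 7 2)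
      exact ⟨_, achQ_pad hz b t h, by linarith, by linarith⟩
    · have b : achQ 7 9 (0 + (cv 7 2 + cv 7 2)) :=
        achQ_add hz (achQ_add (achQ_single 7 2) (achQ_single 7 2))
      exact ⟨_, achQ_pad hz b t h, by linarith, by linarith⟩
  · rcases ht with h | h | h | h | h | h | h | h
    · exact ⟨_, achQ_pad hz (achQ_single 7 3) t h, by linarith, by linarith⟩
    · have b : achQ 7 3 (cv 7 1 + (cv 7 2 + cv 7 3)) :=
        achQ_add (achQ_single 7 1) (achQ_add (achQ_single 7 2) (achQ_single 7 3))
      exact ⟨_, achQ_pad hz b t h, by linarith, by linarith⟩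
    · have b : achQ 7 4 (cv 7 2 + (cv 7 2 + (cv 7 2 + cv 7 2))) :=
        achQ_add (achQ_single 7 2) (achQ_add (achQ_single 7 2)
          (achQ_add (achQ_single 7 2) (achQ_single 7 2)))
      exact ⟨_, achQ_pad hz b t h, by linarith, by linarith⟩
    · have b : achQ 7 5 (cv 7 1 + (cv 7 2 + (cv 7 3 + (cv 7 2 + cv 7 2)))) :=
        achQ_add (achQ_single 7 1) (achQ_add (achQ_single 7 2) (achQ_add (achQ_single 7 3)
          (achQ_add (achQ_single 7 2) (achQ_single 7 2))))
      exact ⟨_, achQ_pad hz b t h, by linarith, by linarith⟩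
    · have b : achQ 7 6 ((cv 7 1 + (cv 7 2 + cv 7 3)) + (cv 7 1 + (cv 7 2 + cv 7 3))) := by
        have b3 : achQ 7 3 (cv 7 1 + (cv 7 2 + cv 7 3)) :=
          achQ_add (achQ_single 7 1) (achQ_add (achQ_single 7 2) (achQ_single 7 3))
        exact achQ_add b3 b3
      exact ⟨_, achQ_pad hz b t h, by linarith, by linarith⟩
    · have b : achQ 7 7 ((cv 7 1 + (cv 7 2 + cv 7 3)) + ((cv 7 0 + (cv 7 2 + cv 7 3))
          + cv 7 2)) := by
        have b3 : achQ 7 3 (cv 7 1 + (cv 7 2 + cv 7 3)) :=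
          achQ_add (achQ_single 7 1) (achQ_add (achQ_single 7 2) (achQ_single 7 3))
        have b3' : achQ 7 3 (cv 7 0 + (cv 7 2 + cv 7 3)) :=
          achQ_add (achQ_single 7 0) (achQ_add (achQ_single 7 2) (achQ_single 7 3))
        exact achQ_add b3 (achQ_add b3' (achQ_single 7 2))
      rw [h70] at b
      exact ⟨_, achQ_pad hz b t h, by linarith, by linarith⟩
    · have b : achQ 7 8 (0 + cv 7 3) := achQ_add hz (achQ_single 7 3)
      exact ⟨_, achQ_pad hz b t h, by linarith, by linarith⟩
    · have b : achQ 7 9 (((cv 7 1 + (cv 7 2 + cv 7 3)) + (cv 7 1 + (cv 7 2 + cv 7 3)))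
          + (cv 7 1 + (cv 7 1 + cv 7 3))) := by
        have b3 : achQ 7 3 (cv 7 1 + (cv 7 2 + cv 7 3)) :=
          achQ_add (achQ_single 7 1) (achQ_add (achQ_single 7 2) (achQ_single 7 3))
        have b3' : achQ 7 3 (cv 7 1 + (cv 7 1 + cv 7 3)) :=
          achQ_add (achQ_single 7 1) (achQ_add (achQ_single 7 1) (achQ_single 7 3))
        exact achQ_add (achQ_add b3 b3) b3'
      exact ⟨_, achQ_pad hz b t h, by linarith, by linarith⟩

lemma sqrt3_bounds : 1.73 < Real.sqrt 3 ∧ Real.sqrt 3 < 1.74 := by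
  have h3 : Real.sqrt 3 ^ 2 = 3 := Real.sq_sqrt (by norm_num)
  have h0 : 0 ≤ Real.sqrt 3 := Real.sqrt_nonneg 3
  constructor <;> nlinarith

lemma cos_five_pi_div_six : Real.cos (5 * Real.pi / 6) = -(Real.sqrt 3 / 2) := by
  rw [show 5 * Real.pi / 6 = Real.pi - Real.pi / 6 by ring, Real.cos_pi_sub,
    Real.cos_pi_div_six]

lemma quintic11 (j : ℕ) (hj1 : 1 ≤ j) (hj5 : j ≤ 5) :
    (cv 11 j)^5 + (cv 11 j)^4 - 4*(cv 11 j)^3 - 3*(cv 11 j)^2 + 3*(cv 11 j) + 1 = 0 := by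
  have hpi := Real.pi_pos
  have hjR1 : (1 : ℝ) ≤ j := by exact_mod_cast hj1
  have hjR5 : (j : ℝ) ≤ 5 := by exact_mod_cast hj5
  set θ : ℝ := 2 * Real.pi * (j : ℝ) / 11 with hθ
  have hθpos : 0 < θ := by rw [hθ]; positivity
  have hθpi : θ ≤ Real.pi := by
    rw [hθ, div_le_iff₀ (by norm_num : (0:ℝ) < 11)]
    nlinarith
  set c : ℝ := Real.cos θ with hc
  have h2 : Real.cos (2*θ) = 2*c^2 - 1 := Real.cos_two_mul θ
  have h3 : Real.cos (3*θ) = 4*c^3 - 3*c := Real.cos_three_mul θ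
  have h4 : Real.cos (4*θ) = 2*Real.cos (2*θ)^2 - 1 := by
    rw [show (4:ℝ)*θ = 2*(2*θ) by ring]
    exact Real.cos_two_mul _
  have h5 : Real.cos (5*θ) = 2*c*Real.cos (4*θ) - Real.cos (3*θ) := by
    have ha := Real.cos_add (4*θ) θ
    have hb := Real.cos_sub (4*θ) θ
    rw [show (4:ℝ)*θ + θ = 5*θ by ring] at ha
    rw [show (4:ℝ)*θ - θ = 3*θ by ring] at hb
    rw [← hc] at ha hb
    linarith
  have h6 : Real.cos (6*θ) = 2*c*Real.cos (5*θ) - Real.cos (4*θ) := by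
    have ha := Real.cos_add (5*θ) θ
    have hb := Real.cos_sub (5*θ) θ
    rw [show (5:ℝ)*θ + θ = 6*θ by ring] at ha
    rw [show (5:ℝ)*θ - θ = 4*θ by ring] at hb
    rw [← hc] at ha hb
    linarith
  have heq : Real.cos (6*θ) = Real.cos (5*θ) := by
    rw [show (6:ℝ)*θ = (j:ℤ)*(2*Real.pi) - 5*θ by rw [hθ]; push_cast; ring]
    exact Real.cos_int_mul_two_pi_sub _ _
  have hc1 : c < 1 := by
    have := Real.cos_lt_cos_of_nonneg_of_le_pi (le_refl 0) hθpi hθpos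
    rwa [Real.cos_zero, ← hc] at this
  have hfac : (c - 1) * (32*c^5 + 16*c^4 - 32*c^3 - 12*c^2 + 6*c + 1) = 0 := by
    linear_combination heq - h6 - (2*c - 1)*h5 - (4*c^2 - 2*c - 1)*h4 + (2*c - 1)*h3
      - 2*(4*c^2 - 2*c - 1)*(Real.cos (2*θ) + 2*c^2 - 1)*h2
  have hR : 32*c^5 + 16*c^4 - 32*c^3 - 12*c^2 + 6*c + 1 = 0 := by
    rcases mul_eq_zero.mp hfac with h | h
    · exact absurd h (by intro hh; linarith)
    · exact h
  have hcv : cv 11 j = 2 * c := by rw [hc, hθ, cv_eq]; norm_num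
  rw [hcv]
  linear_combination hR

lemma q11_pins : (0.83 < cv 11 2 ∧ cv 11 2 < 0.84) ∧ (-0.29 < cv 11 3 ∧ cv 11 3 < -0.28)
    ∧ (-1.31 < cv 11 4 ∧ cv 11 4 < -1.30) ∧ (-1.92 < cv 11 5 ∧ cv 11 5 < -1.91) := by
  have hpi := Real.pi_pos
  obtain ⟨s3a, s3b⟩ := sqrt3_bounds
  have hco2 : 0 < cv 11 2 ∧ cv 11 2 < 1 := by
    rw [cv_val (4 * Real.pi / 11) (by push_cast; ring)]
    constructor
    · have := Real.cos_pos_of_mem_Ioo (x := 4 * Real.pi / 11) ⟨by linarith, by linarith⟩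
      linarith
    · have h := Real.cos_lt_cos_of_nonneg_of_le_pi (by positivity)
        (by linarith : 4 * Real.pi / 11 ≤ Real.pi) (by linarith : Real.pi / 3 < 4 * Real.pi / 11)
      rw [Real.cos_pi_div_three] at h
      linarith
  have hco3 : -1 < cv 11 3 ∧ cv 11 3 < 0 := by
    rw [cv_val (6 * Real.pi / 11) (by push_cast; ring)]
    constructor
    · have h := Real.cos_lt_cos_of_nonneg_of_le_pi (by positivity)
        (by linarith : 2 * Real.pi / 3 ≤ Real.pi) (by linarith : 6 * Real.pi / 11 < 2 * Real.pi / 3)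
      rw [cos_two_pi_div_three] at h
      linarith
    · have h := Real.cos_lt_cos_of_nonneg_of_le_pi (by positivity)
        (by linarith : 6 * Real.pi / 11 ≤ Real.pi) (by linarith : Real.pi / 2 < 6 * Real.pi / 11)
      rw [Real.cos_pi_div_two] at h
      linarith
  have hco4 : -1.74 < cv 11 4 ∧ cv 11 4 < -1 := by
    rw [cv_val (8 * Real.pi / 11) (by push_cast; ring)]
    constructor
    · have h := Real.cos_lt_cos_of_nonneg_of_le_pi (by positivity)
        (by linarith : 5 * Real.pi / 6 ≤ Real.pi) (by linarith : 8 * Real.pi / 11 < 5 * Real.pi / 6)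
      rw [cos_five_pi_div_six] at h
      linarith
    · have h := Real.cos_lt_cos_of_nonneg_of_le_pi (by positivity)
        (by linarith : 8 * Real.pi / 11 ≤ Real.pi) (by linarith : 2 * Real.pi / 3 < 8 * Real.pi / 11)
      rw [cos_two_pi_div_three] at h
      linarith
  have hco5 : -2 ≤ cv 11 5 ∧ cv 11 5 < -1.73 := by
    rw [cv_val (10 * Real.pi / 11) (by push_cast; ring)]
    constructor
    · nlinarith [Real.neg_one_le_cos (10 * Real.pi / 11)]
    · have h := Real.cos_lt_cos_of_nonneg_of_le_pi (by positivity)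
        (by linarith : 10 * Real.pi / 11 ≤ Real.pi) (by linarith : 5 * Real.pi / 6 < 10 * Real.pi / 11)
      rw [cos_five_pi_div_six] at h
      linarith
  have hq2 := quintic11 2 (by norm_num) (by norm_num)
  have hq3 := quintic11 3 (by norm_num) (by norm_num)
  have hq4 := quintic11 4 (by norm_num) (by norm_num)
  have hq5 := quintic11 5 (by norm_num) (by norm_num)
  refine ⟨⟨?_, ?_⟩, ⟨?_, ?_⟩, ⟨?_, ?_⟩, ⟨?_, ?_⟩⟩
  · set v := cv 11 2 with hv
    obtain ⟨hv0, hv1⟩ := hco2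
    have h3le : v^3 ≤ v := by nlinarith
    have h4le : v^4 ≤ v := by nlinarith
    have key : (v - 0.83) * (v^4 + 1.83*v^3 - 2.4811*v^2 - 5.059313*v - 1.19922979)
        = -0.0046392743 := by linear_combination hq2
    have hQ : v^4 + 1.83*v^3 - 2.4811*v^2 - 5.059313*v - 1.19922979 < 0 := by
      nlinarith [sq_nonneg v]
    have := mul_sign_pos' key hQ (by norm_num)
    linarith
  · set v := cv 11 2 with hv
    obtain ⟨hv0, hv1⟩ := hco2
    have h3le : v^3 ≤ v := by nlinarith
    have h4le : v^4 ≤ v := by nlinarith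
    have key : (v - 0.84) * (v^4 + 1.84*v^3 - 2.4544*v^2 - 5.061696*v - 1.25182464)
        = 0.0515326976 := by linear_combination hq2
    have hQ : v^4 + 1.84*v^3 - 2.4544*v^2 - 5.061696*v - 1.25182464 < 0 := by
      nlinarith [sq_nonneg v]
    have := mul_sign_neg' key hQ (by norm_num)
    linarith
  · set v := cv 11 3 with hv
    obtain ⟨hv0, hv1⟩ := hco3
    have hA : v^2 ≤ -v := by nlinarith
    have hB : -(v^2) ≤ v^3 := by nlinarith
    have hC : 0 ≤ v^4 := by positivity
    have key : (v + 0.29) * (v^4 + 0.71*v^3 - 4.2059*v^2 - 1.780289*v + 3.51628381)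
        = 0.0197223049 := by linear_combination hq3
    have hQ : 0 < v^4 + 0.71*v^3 - 4.2059*v^2 - 1.780289*v + 3.51628381 := by
      nlinarith [hA, hB, hC]
    have := mul_sign_pos key hQ (by norm_num)
    linarith
  · set v := cv 11 3 with hv
    obtain ⟨hv0, hv1⟩ := hco3
    have hA : v^2 ≤ -v := by nlinarith
    have hB : -(v^2) ≤ v^3 := by nlinarith
    have hC : 0 ≤ v^4 := by positivity
    have key : (v + 0.28) * (v^4 + 0.72*v^3 - 4.2016*v^2 - 1.823552*v + 3.51059456)
        = -0.0170335232 := by linear_combination hq3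
    have hQ : 0 < v^4 + 0.72*v^3 - 4.2016*v^2 - 1.823552*v + 3.51059456 := by
      nlinarith [hA, hB, hC]
    have := mul_sign_neg key hQ (by norm_num)
    linarith
  · set v := cv 11 4 with hv
    obtain ⟨hv0, hv1⟩ := hco4
    have hsq : v^2 ≤ 3.0276 := by nlinarith
    have hA : v^4 ≤ 3.0276*v^2 := by
      nlinarith [mul_nonneg (by linarith : (0:ℝ) ≤ 3.0276 - v^2) (sq_nonneg v)]
    have hB : -(0.31*(v^3)) ≤ 0.5394*v^2 := by
      nlinarith [mul_nonneg (sq_nonneg v) (by linarith : (0:ℝ) ≤ v + 1.74)]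
    have hC : 1 ≤ v^2 := by nlinarith
    have key : (v + 1.31) * (v^4 - 0.31*v^3 - 3.5939*v^2 + 1.708009*v + 0.76250821)
        = -0.0011142449 := by linear_combination hq4
    have hQ : v^4 - 0.31*v^3 - 3.5939*v^2 + 1.708009*v + 0.76250821 < 0 := by
      nlinarith [hA, hB, hC]
    have := mul_sign_pos' key hQ (by norm_num)
    linarith
  · set v := cv 11 4 with hv
    obtain ⟨hv0, hv1⟩ := hco4
    have hsq : v^2 ≤ 3.0276 := by nlinarith
    have hA : v^4 ≤ 3.0276*v^2 := by
      nlinarith [mul_nonneg (by linarith : (0:ℝ) ≤ 3.0276 - v^2) (sq_nonneg v)]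
    have hB' : -(0.3*(v^3)) ≤ 0.522*v^2 := by
      nlinarith [mul_nonneg (sq_nonneg v) (by linarith : (0:ℝ) ≤ v + 1.74)]
    have hC : 1 ≤ v^2 := by nlinarith
    have key : (v + 1.3) * (v^4 - 0.3*v^3 - 3.61*v^2 + 1.693*v + 0.7991)
        = 0.03883 := by linear_combination hq4
    have hQ : v^4 - 0.3*v^3 - 3.61*v^2 + 1.693*v + 0.7991 < 0 := by
      nlinarith [hA, hB', hC]
    have := mul_sign_neg' key hQ (by norm_num)
    linarith
  · set v := cv 11 5 with hv
    obtain ⟨hv0, hv1⟩ := hco5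
    have hA : 2.9929 ≤ v^2 := by nlinarith
    have hB : 2.9929*v^2 ≤ v^4 := by
      nlinarith [mul_nonneg (by linarith : (0:ℝ) ≤ v^2 - 2.9929) (sq_nonneg v)]
    have hC : 1.5916*v^2 ≤ -(0.92*(v^3)) := by
      nlinarith [mul_nonneg (sq_nonneg v) (by linarith : (0:ℝ) ≤ -(v + 1.73))]
    have key : (v + 1.92) * (v^4 - 0.92*v^3 - 2.2336*v^2 + 1.288512*v + 0.52605696)
        = 0.0100293632 := by linear_combination hq5
    have hQ : 0 < v^4 - 0.92*v^3 - 2.2336*v^2 + 1.288512*v + 0.52605696 := by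
      nlinarith [hA, hB, hC]
    have := mul_sign_pos key hQ (by norm_num)
    linarith
  · set v := cv 11 5 with hv
    obtain ⟨hv0, hv1⟩ := hco5
    have hA : 2.9929 ≤ v^2 := by nlinarith
    have hB' : 2.9929*v^2 ≤ v^4 := by
      nlinarith [mul_nonneg (by linarith : (0:ℝ) ≤ v^2 - 2.9929) (sq_nonneg v)]
    have hC' : 1.5743*v^2 ≤ -(0.91*(v^3)) := by
      nlinarith [mul_nonneg (sq_nonneg v) (by linarith : (0:ℝ) ≤ -(v + 1.73))]
    have key : (v + 1.91) * (v^4 - 0.91*v^3 - 2.2619*v^2 + 1.320229*v + 0.47836261)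
        = -0.0863274149 := by linear_combination hq5
    have hQ : 0 < v^4 - 0.91*v^3 - 2.2619*v^2 + 1.320229*v + 0.47836261 := by
      nlinarith [hA, hB', hC']
    have := mul_sign_neg key hQ (by norm_num)
    linarith

lemma achQ_combo3 (q j1 j2 j3 x y z : ℕ) :
    achQ q (x + y + z) ((x:ℝ) * cv q j1 + (y:ℝ) * cv q j2 + (z:ℝ) * cv q j3) := by
  have h := achQ_add (achQ_add (achQ_nsmul (achQ_single q j1) x)
    (achQ_nsmul (achQ_single q j2) y)) (achQ_nsmul (achQ_single q j3) z)
  simpa using h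

lemma q11_good (n : ℕ) (hn : 1 ≤ n) : good1 11 n ∧ good2 11 n := by
  obtain ⟨⟨a1, a2⟩, ⟨b1, b2⟩, ⟨c1, c2⟩, ⟨d1, d2⟩⟩ := q11_pins
  have hz : achQ 11 11 0 := achQ_full 11 (by norm_num)
  obtain ⟨t, ht⟩ : ∃ t, n = t * 11 + 1 ∨ n = t * 11 + 2 ∨ n = t * 11 + 3 ∨ n = t * 11 + 4
      ∨ n = t * 11 + 5 ∨ n = t * 11 + 6 ∨ n = t * 11 + 7 ∨ n = t * 11 + 8 ∨ n = t * 11 + 9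
      ∨ n = t * 11 + 10 ∨ n = t * 11 + 11 := ⟨(n - 1) / 11, by omega⟩
  constructor
  · rcases ht with h | h | h | h | h | h | h | h | h | h | h
    · exact ⟨_, achQ_pad hz (by simpa using achQ_combo3 11 2 3 5 0 1 0) t (by omega),
        by push_cast; linarith, by push_cast; linarith⟩
    · exact ⟨_, achQ_pad hz (achQ_combo3 11 2 3 5 0 2 0) t (by omega),
        by push_cast; linarith, by push_cast; linarith⟩
    · exact ⟨_, achQ_pad hz (achQ_combo3 11 2 3 5 0 3 0) t (by omega),
        by push_cast; linarith, by push_cast; linarith⟩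
    · exact ⟨_, achQ_pad hz (achQ_combo3 11 2 3 5 1 3 0) t (by omega),
        by push_cast; linarith, by push_cast; linarith⟩
    · exact ⟨_, achQ_pad hz (achQ_combo3 11 2 3 5 1 4 0) t (by omega),
        by push_cast; linarith, by push_cast; linarith⟩
    · exact ⟨_, achQ_pad hz (achQ_combo3 11 2 3 5 1 5 0) t (by omega),
        by push_cast; linarith, by push_cast; linarith⟩
    · exact ⟨_, achQ_pad hz (achQ_combo3 11 2 3 5 1 6 0) t (by omega),
        by push_cast; linarith, by push_cast; linarith⟩
    · exact ⟨_, achQ_pad hz (achQ_combo3 11 2 3 5 2 6 0) t (by omega),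
        by push_cast; linarith, by push_cast; linarith⟩
    · exact ⟨_, achQ_pad hz (achQ_combo3 11 2 3 5 2 7 0) t (by omega),
        by push_cast; linarith, by push_cast; linarith⟩
    · exact ⟨_, achQ_pad hz (achQ_combo3 11 2 3 5 2 8 0) t (by omega),
        by push_cast; linarith, by push_cast; linarith⟩
    · exact ⟨0, achQ_pad hz hz t h, by norm_num, by norm_num⟩
  · rcases ht with h | h | h | h | h | h | h | h | h | h | h
    · exact ⟨_, achQ_pad hz (achQ_combo3 11 4 3 5 1 0 0) t (by omega),
        by push_cast; linarith, by push_cast; linarith⟩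
    · exact ⟨_, achQ_pad hz (achQ_combo3 11 4 3 5 1 1 0) t (by omega),
        by push_cast; linarith, by push_cast; linarith⟩
    · exact ⟨_, achQ_pad hz (achQ_combo3 11 4 3 5 1 2 0) t (by omega),
        by push_cast; linarith, by push_cast; linarith⟩
    · exact ⟨_, achQ_pad hz (achQ_combo3 11 2 3 5 1 2 1) t (by omega),
        by push_cast; linarith, by push_cast; linarith⟩
    · exact ⟨_, achQ_pad hz (achQ_combo3 11 2 3 5 1 3 1) t (by omega),
        by push_cast; linarith, by push_cast; linarith⟩
    · exact ⟨_, achQ_pad hz (achQ_combo3 11 2 3 5 2 3 1) t (by omega),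
        by push_cast; linarith, by push_cast; linarith⟩
    · exact ⟨_, achQ_pad hz (achQ_combo3 11 2 3 5 2 4 1) t (by omega),
        by push_cast; linarith, by push_cast; linarith⟩
    · exact ⟨_, achQ_pad hz (achQ_combo3 11 2 3 5 2 5 1) t (by omega),
        by push_cast; linarith, by push_cast; linarith⟩
    · exact ⟨_, achQ_pad hz (achQ_combo3 11 2 3 5 2 6 1) t (by omega),
        by push_cast; linarith, by push_cast; linarith⟩
    · exact ⟨_, achQ_pad hz (achQ_combo3 11 2 3 5 3 6 1) t (by omega),
        by push_cast; linarith, by push_cast; linarith⟩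
    · exact ⟨_, achQ_pad hz (achQ_combo3 11 2 3 5 3 7 1) t (by omega),
        by push_cast; linarith, by push_cast; linarith⟩

set_option maxHeartbeats 1000000 in
/-- for `q ≥ 4` and `(n,q)` outside a finite list of exceptions, the Lee
graph `G(n,q)` has eigenvalues `θ₁*` and `θ₂*` with `0 ≥ θ₁* > −1` and `−1 ≥ θ₂* ≥ −2`. -/
theorem stmt12 (n q : ℕ) [NeZero q] (hn : 1 ≤ n) (hq : 4 ≤ q)
    (hexc : (n, q) ∉ ({(1, 5), (2, 5), (1, 6), (2, 7), (1, 9)} : Set (ℕ × ℕ))) :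
    ∃ θ₁ θ₂ : ℝ, IsAdjEigenvalue (leeGraph n q) θ₁ ∧ IsAdjEigenvalue (leeGraph n q) θ₂ ∧
      θ₁ ≤ 0 ∧ -1 < θ₁ ∧ θ₂ ≤ -1 ∧ -2 ≤ θ₂ := by
  simp only [Set.mem_insert_iff, Set.mem_singleton_iff, Prod.mk.injEq] at hexc
  have hgood : good1 q n ∧ good2 q n := by
    rcases Nat.lt_or_ge q 13 with hlt | hge
    · interval_cases q
      · exact q4_good n hn
      · exact q5_good n (by omega)
      · exact q6_good n (by omega)
      · exact q7_good n (by omega)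
      · exact q8_good n hn
      · exact q9_good n (by omega)
      · exact q10_good n hn
      · exact q11_good n hn
      · exact q12_good n hn
    · exact largeq_good q hge n hn
  obtain ⟨⟨s1, hach1, hs1a, hs1b⟩, ⟨s2, hach2, hs2a, hs2b⟩⟩ := hgood
  obtain ⟨k1, hk1⟩ := hach1
  obtain ⟨k2, hk2⟩ := hach2
  have e1 := lee_eigen n q (by omega) k1
  have e2 := lee_eigen n q (by omega) k2
  rw [hk1] at e1
  rw [hk2] at e2
  exact ⟨s1, s2, e1, e2, hs1b, hs1a, hs2b, hs2a⟩
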